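/- arXiv:1104.4584 — 2 statements merged into one kernel-verified Lean document; each statement's English description precedes it below -/
import Mathlib

section
/- Let t, q be elements of a commutative ring. For every integer k ≥ 1, (1 − t·q)·T_k(t·q, q) = T_k(t, q) + t^2 · q^{2k+1} · T_{k−1}(t, q). -/
/-!
Only the three-term recurrence `T_{k+2} = T_{k+1} - q^{2k+3} (T_{k+1} - t² T_k)` matters: it follows
from the defining sum because shifting `k` multiplies every summand by `(-q)^{2k+3}`. Both sides of
the identity then satisfy compatible recurrences, and a two-step induction from `k = 1, 2` concludes.
-/

/-- The polynomials `T_k(t,q)` defined by `T_0 = 1` and, for `k ≥ 1`,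
`T_k = T_{k-1} + (1+t)(-q)^{k²} + (1-t²) ∑_{i=1}^{k-1} (-q)^{k²-i²} T_{i-1}`
(below the sum is reindexed by `i ↦ i+1`). -/
def T {R : Type*} [CommRing R] (t q : R) : ℕ → R
  | 0 => 1
  | (k+1) => T t q k + (1 + t) * (-q) ^ ((k+1)^2) +
      (1 - t^2) * ∑ i ∈ (Finset.range k).attach,
        (-q) ^ ((k+1)^2 - (i.1+1)^2) * T t q i.1
decreasing_by
  · exact Nat.lt_succ_self k
  · exact Nat.lt_succ_of_lt (Finset.mem_range.mp i.2)

/-- `f n h` with `f 0 0 = 1`, `f 0 h = 0` for `h ≥ 1`, `f n h = 0` for `h < 0`, and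
`f n h = (1-q^h) f (n-1) (h-1) + (1-t q^{h+1}) f (n-1) (h+1)`; at `h = 0` the first
term vanishes since `1 - q^0 = 0`. -/
def f {R : Type*} [CommRing R] (t q : R) : ℕ → ℕ → R
  | 0, h => if h = 0 then 1 else 0
  | (n+1), 0 => (1 - t * q) * f t q n 1
  | (n+1), (h+1) => (1 - q^(h+1)) * f t q n h + (1 - t * q^(h+2)) * f t q n (h+2)

/-- `Ẽ_n(t,q) = f(2n,0)`, which is `(1-q)^{2n}` times the `(t,q)`-Euler number. -/
def Etilde {R : Type*} [CommRing R] (t q : R) (n : ℕ) : R := f t q (2*n) 0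

/-- Binomial coefficient with integer lower index, `0` when the lower index is negative. -/
def binom (n : ℕ) (m : ℤ) : ℤ := if 0 ≤ m then (n.choose m.toNat : ℤ) else 0

/-- q-Pochhammer symbol `(a;q)_n = ∏_{j=0}^{n-1} (1 - a q^j)`. -/
def qPoch {K : Type*} [CommRing K] (a q : K) (n : ℕ) : K :=
  ∏ j ∈ Finset.range n, (1 - a * q ^ j)

/-- Gaussian binomial coefficient `[n choose k]_q = (q;q)_n / ((q;q)_k (q;q)_{n-k})`,
equal to `0` whenever `k < 0` or `k > n`. -/
def gauss {K : Type*} [Field K] (q : K) (n k : ℤ) : K :=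
  if 0 ≤ k ∧ k ≤ n then
    qPoch q q n.toNat / (qPoch q q k.toNat * qPoch q q (n - k).toNat)
  else 0

/-- Number of distinct (positive) part sizes of the partition encoded by an
antitone function `Fin m → Fin (n+1)`. -/
def distCard {m n : ℕ} (g : Fin m → Fin (n+1)) : ℕ :=
  ((Finset.univ.image fun i => ((g i : ℕ))).erase 0).card

/-- `∑_{λ ⊆ B(m,n)} x^{dist(λ)} q^{|λ|}`: partitions in the `m × n` box are encoded
as antitone functions `Fin m → Fin (n+1)`. -/
def boxSum {R : Type*} [CommRing R] (x q : R) (m n : ℕ) : R :=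
  ∑ g ∈ Finset.univ.filter (fun g : Fin m → Fin (n+1) => ∀ i j : Fin m, i ≤ j → g j ≤ g i),
    x ^ distCard g * q ^ (∑ i, (g i : ℕ))

section

variable {R : Type*} [CommRing R] (t q : R)

theorem T_zero : T t q 0 = 1 := by
  rw [T]

theorem T_succ (k : ℕ) :
    T t q (k + 1) = T t q k + (1 + t) * (-q) ^ ((k + 1) ^ 2) +
      (1 - t ^ 2) * ∑ i ∈ Finset.range k, (-q) ^ ((k + 1) ^ 2 - (i + 1) ^ 2) * T t q i := by
  rw [T, Finset.sum_attach (Finset.range k) fun i => (-q) ^ ((k + 1) ^ 2 - (i + 1) ^ 2) * T t q i]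

theorem T_one : T t q 1 = 1 - q - t * q := by
  rw [T_succ, T_zero]
  simp only [Finset.range_zero, Finset.sum_empty]
  ring

theorem T_sum_shift (k : ℕ) :
    ∑ i ∈ Finset.range (k + 1), (-q) ^ ((k + 2) ^ 2 - (i + 1) ^ 2) * T t q i =
      (-q) ^ (2 * k + 3) *
        (∑ i ∈ Finset.range k, (-q) ^ ((k + 1) ^ 2 - (i + 1) ^ 2) * T t q i + T t q k) := by
  have shift : ∀ i ≤ k, (k + 2) ^ 2 - (i + 1) ^ 2 = 2 * k + 3 + ((k + 1) ^ 2 - (i + 1) ^ 2) := by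
    intro i hi
    have : (i + 1) ^ 2 ≤ (k + 1) ^ 2 := Nat.pow_le_pow_left (by omega) 2
    have : (k + 2) ^ 2 = (k + 1) ^ 2 + (2 * k + 3) := by ring
    omega
  rw [Finset.sum_range_succ, mul_add, Finset.mul_sum, shift k le_rfl, Nat.sub_self, add_zero]
  congr 1
  refine Finset.sum_congr rfl fun i hi => ?_
  rw [shift i (Finset.mem_range.mp hi).le, pow_add, mul_assoc]

theorem T_add_two (k : ℕ) :
    T t q (k + 2) = T t q (k + 1) - q ^ (2 * k + 3) * (T t q (k + 1) - t ^ 2 * T t q k) := by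
  have odd_pow : (-q) ^ (2 * k + 3) = -q ^ (2 * k + 3) := Odd.neg_pow ⟨k + 1, by ring⟩ q
  have sq_pow : (-q) ^ ((k + 2) ^ 2) = (-q) ^ (2 * k + 3) * (-q) ^ ((k + 1) ^ 2) := by
    rw [← pow_add]
    ring_nf
  rw [T_succ t q (k + 1), T_sum_shift, T_succ t q k, sq_pow, odd_pow]
  ring

theorem one_sub_mul_T_succ (k : ℕ) :
    (1 - t * q) * T (t * q) q (k + 1) = T t q (k + 1) + t ^ 2 * q ^ (2 * k + 3) * T t q k := by
  induction k using Nat.twoStepInduction with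
  | zero =>
    rw [T_one, T_one, T_zero]
    ring
  | one =>
    rw [T_add_two, T_add_two, T_one, T_one, T_zero, T_zero]
    ring
  | more n ih₀ ih₁ =>
    rw [T_add_two (t * q), T_add_two t q (n + 1)]
    linear_combination (1 - q ^ (2 * n + 5)) * ih₁ + t ^ 2 * q ^ (2 * n + 7) * ih₀ -
      t ^ 2 * q ^ (2 * n + 7) * T_add_two t q n

end

theorem stmt_2 {R : Type*} [CommRing R] (t q : R) (k : ℕ) (hk : 1 ≤ k) :
    (1 - t * q) * T (t * q) q k = T t q k + t^2 * q^(2*k+1) * T t q (k-1) := by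
  obtain ⟨m, rfl⟩ := Nat.exists_eq_add_of_le' hk
  simpa only [Nat.add_sub_cancel, show 2 * (m + 1) + 1 = 2 * m + 3 by ring] using
    one_sub_mul_T_succ t q m
end

section
/- Let K be a field and let q ∈ K be nonzero. For every integer n ≥ 0, Ẽ_n(−q^{−1}, q) = Σ_{k=0}^{n} (binom(2n, n−k) − binom(2n, n−k−1)) · Σ_{i=−k}^{k} (−1)^i · q^{i^2}, where binom denotes the ordinary binomial coefficient (with binom(2n, m) = 0 for m < 0). -/
/-!
At `t = -q⁻¹` the up-weights of the recursion for `f` are `2` at height `0` and `1 + q^(h+1)` at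
height `h + 1`. For `N = 2m + h` one proves `f(N, h) = ∑_{k ≤ m} ballot(N, m - k) · A(h, k)` by
induction on `N`: comparing one step of the recursion for `f` with Pascal's rule for the ballot
numbers reduces this to three local relations for the array `A`. At `t = -q⁻¹` they are solved by
`A(h, k) = ∑_{j ≤ k} D(h, j)` (`thetaSum`, `thetaCoeff`) with
`D(h+1, j) = (-1)^j q^{j²} (1 - q^{2j+h+1}) (q;q)_h [j+h choose j]_{q²}`, using only Pascal's
rules and absorption for `q²`-binomials, and the row `A(0, k)` is the partial theta sum
`∑_{|i| ≤ k} (-1)^i q^{i²}`.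
-/

open Finset

section QBinomial

variable {R : Type*} [CommRing R] (Q : R)

/-- `qBinom Q a b` is the Gaussian binomial coefficient `[a + b choose a]_Q`, indexed by the two
part sizes so that Pascal's rule needs no truncated subtraction. -/
def qBinom : ℕ → ℕ → R
  | 0, _ => 1
  | _ + 1, 0 => 1
  | a + 1, b + 1 => qBinom (a + 1) b + Q ^ (b + 1) * qBinom a (b + 1)

@[simp] lemma qBinom_zero_left (b : ℕ) : qBinom Q 0 b = 1 := by rw [qBinom]

@[simp] lemma qBinom_zero_right (a : ℕ) : qBinom Q a 0 = 1 := by cases a <;> rw [qBinom]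

lemma qBinom_succ_succ (a b : ℕ) :
    qBinom Q (a + 1) (b + 1) = qBinom Q (a + 1) b + Q ^ (b + 1) * qBinom Q a (b + 1) := by
  rw [qBinom]

lemma qBinom_succ_succ' : ∀ a b : ℕ,
    qBinom Q (a + 1) (b + 1) = Q ^ (a + 1) * qBinom Q (a + 1) b + qBinom Q a (b + 1)
  | 0, 0 => by rw [qBinom_succ_succ]; simp only [qBinom_zero_left, qBinom_zero_right]; ring
  | 0, b + 1 => by
    have ih := qBinom_succ_succ' 0 b
    have e := qBinom_succ_succ Q 0 b
    rw [qBinom_succ_succ]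
    simp only [qBinom_zero_left] at ih e ⊢
    linear_combination ih - Q * e
  | a + 1, 0 => by
    have ih := qBinom_succ_succ' a 0
    have e := qBinom_succ_succ Q a 0
    rw [qBinom_succ_succ]
    simp only [qBinom_zero_right] at ih e ⊢
    linear_combination Q * ih - e
  | a + 1, b + 1 => by
    have ih₁ := qBinom_succ_succ' (a + 1) b
    have ih₂ := qBinom_succ_succ' a (b + 1)
    rw [qBinom_succ_succ]
    linear_combination ih₁ + Q ^ (b + 2) * ih₂ - Q ^ (a + 2) * qBinom_succ_succ Q (a + 1) b
      - qBinom_succ_succ Q a (b + 1)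

lemma one_sub_pow_mul_qBinom_succ (a b : ℕ) :
    (1 - Q ^ (b + 1)) * qBinom Q a (b + 1) = (1 - Q ^ (a + b + 1)) * qBinom Q a b := by
  cases a with
  | zero => simp
  | succ a =>
    linear_combination qBinom_succ_succ Q a b - Q ^ (b + 1) * qBinom_succ_succ' Q a b

end QBinomial

section Ballot

lemma binom_succ (n : ℕ) (j : ℤ) : binom (n + 1) j = binom n j + binom n (j - 1) := by
  rcases lt_trichotomy j 0 with hj | rfl | hj
  · simp only [binom, if_neg (show ¬ 0 ≤ j by omega), if_neg (show ¬ 0 ≤ j - 1 by omega),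
      add_zero]
  · simp [binom]
  · obtain ⟨i, rfl⟩ : ∃ i : ℕ, j = i + 1 := ⟨j.toNat - 1, by omega⟩
    simp only [binom, if_pos (show (0 : ℤ) ≤ i + 1 by omega), add_sub_cancel_right,
      if_pos (show (0 : ℤ) ≤ i by omega), show ((i : ℤ) + 1).toNat = i + 1 by omega,
      Int.toNat_natCast, Nat.choose_succ_succ', Nat.cast_add]
    ring

/-- `ballot n j = C(n, j) - C(n, j - 1)` counts the paths of `n` up and down steps from height `0`
that never go below `0` and end at height `n - 2 j`. -/
def ballot (n : ℕ) (j : ℤ) : ℤ := binom n j - binom n (j - 1)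

lemma ballot_succ (n : ℕ) (j : ℤ) : ballot (n + 1) j = ballot n j + ballot n (j - 1) := by
  simp only [ballot, binom_succ]; ring

@[simp] lemma ballot_zero (n : ℕ) : ballot n 0 = 1 := by simp [ballot, binom]

@[simp] lemma ballot_neg_one (n : ℕ) : ballot n (-1) = 0 := by simp [ballot, binom]

lemma ballot_two_mul_add_one (m : ℕ) : ballot (2 * m + 1) (m + 1) = 0 := by
  simp only [ballot, binom, if_pos (show (0 : ℤ) ≤ m + 1 by omega), add_sub_cancel_right,
    if_pos (show (0 : ℤ) ≤ m by omega), show ((m : ℤ) + 1).toNat = m + 1 by omega,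
    Int.toNat_natCast, Nat.choose_symm_half, sub_self]

variable {R : Type*} [CommRing R]

lemma sum_range_succ_sub_mul (c : ℤ → R) (a : ℕ → R) (m : ℕ) :
    ∑ k ∈ range (m + 2), c ((m : ℤ) + 1 - k) * a k
      = c ((m : ℤ) + 1) * a 0 + ∑ k ∈ range (m + 1), c ((m : ℤ) - k) * a (k + 1) := by
  rw [sum_range_succ', add_comm]
  congr 1
  refine sum_congr rfl fun k _ => ?_
  push_cast
  ring_nf

lemma sum_ballot_succ_mul (n m : ℕ) (a : ℕ → R) :
    ∑ k ∈ range (m + 2), (ballot (n + 1) ((m : ℤ) + 1 - k) : R) * a k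
      = ballot n ((m : ℤ) + 1) * a 0
        + ∑ k ∈ range (m + 1), (ballot n ((m : ℤ) - k) : R) * (a (k + 1) + a k) := by
  have shifted : ∑ k ∈ range (m + 2), (ballot n ((m : ℤ) + 1 - k - 1) : R) * a k
      = ∑ k ∈ range (m + 1), (ballot n ((m : ℤ) - k) : R) * a k := by
    rw [sum_range_succ]
    simp only [show (m : ℤ) + 1 - ((m + 1 : ℕ) : ℤ) - 1 = -1 by push_cast; ring,
      ballot_neg_one, Int.cast_zero, zero_mul, add_zero]
    exact sum_congr rfl fun k _ => by rw [sub_right_comm, add_sub_cancel_right]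
  simp only [ballot_succ, Int.cast_add, add_mul, sum_add_distrib, shifted,
    sum_range_succ_sub_mul (fun j => (ballot n j : R)), mul_add]
  ring

end Ballot

lemma f_eq_zero_of_lt {R : Type*} [CommRing R] (t q : R) :
    ∀ {n h : ℕ}, n < h → f t q n h = 0
  | 0, h + 1, _ => by simp [f]
  | n + 1, h + 1, hlt => by
    rw [f, f_eq_zero_of_lt t q (by omega : n < h), f_eq_zero_of_lt t q (by omega : n < h + 2)]
    ring

theorem f_eq_sum_ballot_mul {R : Type*} [CommRing R] (t q : R) (A : ℕ → ℕ → R)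
    (hA₀ : A 0 0 = 1) (hA_zero : ∀ h, A (h + 1) 0 = (1 - q ^ (h + 1)) * A h 0)
    (hA_bottom : ∀ k, A 0 (k + 1) + A 0 k = (1 - t * q) * A 1 k)
    (hA_step : ∀ h k, A (h + 1) (k + 1) + A (h + 1) k
      = (1 - q ^ (h + 1)) * A h (k + 1) + (1 - t * q ^ (h + 2)) * A (h + 2) k)
    (m h : ℕ) :
    f t q (2 * m + h) h
      = ∑ k ∈ range (m + 1), (ballot (2 * m + h) ((m : ℤ) - k) : R) * A h k := by
  induction hN : 2 * m + h generalizing m h with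
  | zero =>
    obtain ⟨rfl, rfl⟩ : m = 0 ∧ h = 0 := by omega
    simp [f, hA₀]
  | succ n ih =>
    cases h with
    | zero =>
      obtain ⟨m, rfl⟩ : ∃ m', m = m' + 1 := ⟨m - 1, by omega⟩
      have hn : n = 2 * m + 1 := by omega
      rw [f, ih m 1 (by omega)]
      push_cast
      rw [sum_ballot_succ_mul, hn, ballot_two_mul_add_one, Int.cast_zero, zero_mul, zero_add,
        mul_sum]
      exact sum_congr rfl fun k _ => by rw [hA_bottom]; ring
    | succ h =>
      rw [f]
      rcases m with _ | m
      · rw [f_eq_zero_of_lt t q (by omega : n < h + 2), ih 0 h (by omega)]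
        simp [hA_zero]
      · rw [ih (m + 1) h (by omega), ih m (h + 2) (by omega)]
        push_cast
        rw [sum_ballot_succ_mul, sum_range_succ_sub_mul (fun j => (ballot n j : R)), hA_zero,
          mul_add, mul_sum, mul_sum, add_assoc, ← sum_add_distrib]
        simp only [hA_step]
        congr 1
        · ring
        · exact sum_congr rfl fun k _ => by ring

section ThetaArray

variable {R : Type*} [CommRing R] (q : R)

@[simp] lemma qPoch_zero (a : R) : qPoch a q 0 = 1 := prod_range_zero _

lemma qPoch_succ (a : R) (n : ℕ) : qPoch a q (n + 1) = qPoch a q n * (1 - a * q ^ n) :=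
  prod_range_succ _ _

def thetaCoeff : ℕ → ℕ → R
  | 0, j => if j = 0 then 1 else 2 * (-1) ^ j * q ^ (j ^ 2)
  | h + 1, j =>
    (-1) ^ j * q ^ (j ^ 2) * (1 - q ^ (2 * j + h + 1)) * qPoch q q h * qBinom (q ^ 2) j h

def thetaSum (h k : ℕ) : R := ∑ j ∈ range (k + 1), thetaCoeff q h j

lemma thetaCoeff_zero_right (h : ℕ) : thetaCoeff q h 0 = qPoch q q h := by
  cases h with
  | zero => rw [thetaCoeff, if_pos rfl, qPoch_zero]
  | succ h => rw [thetaCoeff, qBinom_zero_left, qPoch_succ]; ring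

lemma thetaCoeff_succ_zero (h : ℕ) :
    thetaCoeff q (h + 1) 0 = (1 - q ^ (h + 1)) * thetaCoeff q h 0 := by
  rw [thetaCoeff_zero_right, thetaCoeff_zero_right, qPoch_succ]; ring

lemma thetaSum_zero (h : ℕ) : thetaSum q h 0 = thetaCoeff q h 0 := sum_range_one _

lemma thetaSum_succ (h k : ℕ) : thetaSum q h (k + 1) = thetaSum q h k + thetaCoeff q h (k + 1) :=
  sum_range_succ _ _

lemma thetaCoeff_succ_succ_add (h j : ℕ) :
    thetaCoeff q (h + 1) (j + 1) + thetaCoeff q (h + 1) j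
      = (1 - q ^ (h + 1)) * thetaCoeff q h (j + 1)
        + (1 + q ^ (h + 1)) * thetaCoeff q (h + 2) j := by
  cases h with
  | zero =>
    have e := one_sub_pow_mul_qBinom_succ (q ^ 2) j 0
    simp only [thetaCoeff, if_neg j.succ_ne_zero, qPoch_succ, qPoch_zero, qBinom_zero_right]
      at e ⊢
    linear_combination (-(-1 : R) ^ j * q ^ (j ^ 2) * (1 - q ^ (2 * j + 2))) * e
  | succ i =>
    have e₁ := qBinom_succ_succ (q ^ 2) j i
    have e₂ := qBinom_succ_succ' (q ^ 2) j i
    have e₃ := one_sub_pow_mul_qBinom_succ (q ^ 2) j (i + 1)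
    simp only [thetaCoeff, qPoch_succ q q (i + 1), qPoch_succ q q i]
    linear_combination (-1 : R) ^ j * q ^ (j ^ 2) * qPoch q q i *
      (q ^ (2 * j) * (q ^ (i + 2) * (1 - q) * (e₂ - e₁)
          - q * (1 - q ^ (2 * j + i + 4)) * (1 - q ^ (i + 1)) * e₁)
        - (1 - q ^ (2 * j + i + 3)) * (1 - q ^ (i + 1)) * e₃)

lemma thetaSum_succ_succ_add (h k : ℕ) :
    thetaSum q (h + 1) (k + 1) + thetaSum q (h + 1) k
      = (1 - q ^ (h + 1)) * thetaSum q h (k + 1) + (1 + q ^ (h + 1)) * thetaSum q (h + 2) k := by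
  induction k with
  | zero =>
    rw [thetaSum_succ, thetaSum_succ]
    simp only [thetaSum_zero]
    linear_combination thetaCoeff_succ_succ_add q h 0 + thetaCoeff_succ_zero q h
  | succ k ih =>
    linear_combination thetaSum_succ q (h + 1) (k + 1) + thetaSum_succ q (h + 1) k + ih
      + thetaCoeff_succ_succ_add q h (k + 1) - (1 - q ^ (h + 1)) * thetaSum_succ q h (k + 1)
      - (1 + q ^ (h + 1)) * thetaSum_succ q (h + 2) k

lemma thetaSum_zero_succ_add (k : ℕ) :
    thetaSum q 0 (k + 1) + thetaSum q 0 k = 2 * thetaSum q 1 k := by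
  induction k with
  | zero =>
    rw [thetaSum_succ, thetaSum_zero, thetaSum_zero, thetaCoeff_zero_right, thetaCoeff_zero_right,
      qPoch_succ, qPoch_zero, thetaCoeff, if_neg (Nat.succ_ne_zero 0)]
    ring
  | succ k ih =>
    have e : thetaCoeff q 0 (k + 2) + thetaCoeff q 0 (k + 1) = 2 * thetaCoeff q 1 (k + 1) := by
      simp only [thetaCoeff, qPoch_zero, qBinom_zero_right, if_neg (Nat.succ_ne_zero _)]
      ring
    linear_combination thetaSum_succ q 0 (k + 1) + thetaSum_succ q 0 k + ih + e
      - 2 * thetaSum_succ q 1 k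

end ThetaArray

lemma sum_Icc_neg_succ {M : Type*} [AddCommMonoid M] (g : ℤ → M) (k : ℕ) :
    ∑ i ∈ Icc (-((k : ℤ) + 1)) ((k : ℤ) + 1), g i
      = ∑ i ∈ Icc (-(k : ℤ)) k, g i + (g (-((k : ℤ) + 1)) + g ((k : ℤ) + 1)) := by
  have hIcc : Icc (-((k : ℤ) + 1)) ((k : ℤ) + 1)
      = insert (-((k : ℤ) + 1)) (insert ((k : ℤ) + 1) (Icc (-(k : ℤ)) k)) := by
    ext i; simp only [mem_Icc, mem_insert]; omega
  rw [hIcc, sum_insert (by simp only [mem_insert, mem_Icc]; omega),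
    sum_insert (by simp only [mem_Icc]; omega)]
  abel

lemma thetaSum_zero_left {K : Type*} [Field K] (q : K) (k : ℕ) :
    thetaSum q 0 k = ∑ i ∈ Icc (-(k : ℤ)) k, (-1 : K) ^ i * q ^ (i ^ 2) := by
  induction k with
  | zero => simp [thetaSum, thetaCoeff]
  | succ k ih =>
    rw [thetaSum_succ, ih, Nat.cast_succ, sum_Icc_neg_succ]
    have hsq : q ^ (((k : ℤ) + 1) ^ 2) = q ^ ((k + 1) ^ 2) := by
      rw [← zpow_natCast]; push_cast; rfl
    rw [neg_sq, zpow_neg, ← inv_zpow, inv_neg_one, hsq, ← Nat.cast_add_one, zpow_natCast,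
      thetaCoeff, if_neg k.succ_ne_zero]
    ring

theorem stmt_14 {K : Type*} [Field K] (q : K) (hq : q ≠ 0) (n : ℕ) :
    Etilde (-q⁻¹) q n = ∑ k ∈ Finset.range (n+1),
      (((binom (2*n) ((n:ℤ) - k) - binom (2*n) ((n:ℤ) - k - 1) : ℤ) : K)) *
        ∑ i ∈ Finset.Icc (-(k:ℤ)) (k:ℤ), (-1 : K) ^ i * q ^ (i^2) := by
  have hweight₀ : 1 - -q⁻¹ * q = 2 := by
    rw [neg_mul, inv_mul_cancel₀ hq, sub_neg_eq_add, one_add_one_eq_two]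
  have hweight (h : ℕ) : 1 - -q⁻¹ * q ^ (h + 2) = 1 + q ^ (h + 1) := by
    rw [pow_succ' q (h + 1), neg_mul, ← mul_assoc, inv_mul_cancel₀ hq, one_mul, sub_neg_eq_add]
  have key := f_eq_sum_ballot_mul (-q⁻¹) q (thetaSum q)
    (by rw [thetaSum_zero, thetaCoeff_zero_right, qPoch_zero])
    (fun h => by simp only [thetaSum_zero, thetaCoeff_succ_zero])
    (fun k => by rw [thetaSum_zero_succ_add, hweight₀])
    (fun h k => by rw [thetaSum_succ_succ_add, hweight]) n 0
  rw [Etilde, ← Nat.add_zero (2 * n), key]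
  exact sum_congr rfl fun k _ => by rw [thetaSum_zero_left]; rfl
end
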